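/- If s ∈ S₂(K) satisfies the eight conditions s(V_i) = 0 for i = 1,2,3,4 and ∫₀ᵃ s(x,0) dx = ∫₀ᵃ s(x,b) dx = ∫₀ᵇ s(a,y) dy = ∫₀ᵇ s(0,y) dy = 0, then s is the zero polynomial. (Unisolvency of the second-order serendipity element with vertex values and edge integrals as degrees of freedom.) -/
import Mathlib
open MvPolynomial

/-- Membership in the second-order serendipity space
`S₂(K) = P₂ ⊕ span{x²y, xy²}`. -/
def memS2 (s : MvPolynomial (Fin 2) ℝ) : Prop :=
  ∃ (p : MvPolynomial (Fin 2) ℝ) (c d : ℝ),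
    p.totalDegree ≤ 2 ∧ s = p + C c * X 0 ^ 2 * X 1 + C d * X 0 * X 1 ^ 2

noncomputable def ee (n0 n1 : ℕ) : Fin 2 →₀ ℕ := Finsupp.single 0 n0 + Finsupp.single 1 n1

lemma ee_eq_iff {n0 n1 k0 k1 : ℕ} : ee n0 n1 = ee k0 k1 ↔ n0 = k0 ∧ n1 = k1 := by
  constructor
  · intro h
    constructor
    · have := DFunLike.congr_fun h 0; simpa [ee, Finsupp.single_apply] using this
    · have := DFunLike.congr_fun h 1; simpa [ee, Finsupp.single_apply] using this
  · rintro ⟨rfl, rfl⟩; rfl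

lemma m_eq_ee (m : Fin 2 →₀ ℕ) : m = ee (m 0) (m 1) := by
  ext i; fin_cases i <;> simp [ee, Finsupp.single_apply]

lemma ee_sum (n0 n1 : ℕ) : ∑ i ∈ (ee n0 n1).support, (ee n0 n1) i = n0 + n1 := by
  rw [Finset.sum_subset (Finset.subset_univ _)]
  · simp [Fin.sum_univ_two, ee, Finsupp.single_apply]
  · intro x _ hx; simpa using hx

lemma cxy21 (c : ℝ) : (C c * X 0 ^ 2 * X 1 : MvPolynomial (Fin 2) ℝ) = monomial (ee 2 1) c := by
  rw [X_pow_eq_monomial, X, C_mul_monomial, monomial_mul, mul_one, mul_one]; rfl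

lemma cxy12 (d : ℝ) : (C d * X 0 * X 1 ^ 2 : MvPolynomial (Fin 2) ℝ) = monomial (ee 1 2) d := by
  rw [X_pow_eq_monomial, X, C_mul_monomial, monomial_mul, mul_one, mul_one]; rfl

lemma rep (s : MvPolynomial (Fin 2) ℝ) (hs : memS2 s) :
    s = monomial (ee 0 0) (coeff (ee 0 0) s) + monomial (ee 1 0) (coeff (ee 1 0) s)
      + monomial (ee 0 1) (coeff (ee 0 1) s) + monomial (ee 2 0) (coeff (ee 2 0) s)
      + monomial (ee 1 1) (coeff (ee 1 1) s) + monomial (ee 0 2) (coeff (ee 0 2) s)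
      + monomial (ee 2 1) (coeff (ee 2 1) s) + monomial (ee 1 2) (coeff (ee 1 2) s) := by
  obtain ⟨p, c, d, hdeg, hsrep⟩ := hs
  ext m
  obtain ⟨n0, n1, rfl⟩ : ∃ n0 n1, m = ee n0 n1 := ⟨m 0, m 1, m_eq_ee m⟩
  simp only [coeff_add, coeff_monomial]
  by_cases h : n0 + n1 ≤ 2
  · have h0 : n0 ≤ 2 := le_trans (Nat.le_add_right _ _) h
    have h1 : n1 ≤ 2 := le_trans (Nat.le_add_left _ _) h
    interval_cases n0 <;> interval_cases n1 <;> simp_all [ee_eq_iff]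
  · by_cases h21 : n0 = 2 ∧ n1 = 1
    · obtain ⟨rfl, rfl⟩ := h21; simp [ee_eq_iff]
    · by_cases h12 : n0 = 1 ∧ n1 = 2
      · obtain ⟨rfl, rfl⟩ := h12; simp [ee_eq_iff]
      · have hz : coeff (ee n0 n1) s = 0 := by
          rw [hsrep, cxy21, cxy12]
          simp only [coeff_add, coeff_monomial, ee_eq_iff]
          rw [coeff_eq_zero_of_totalDegree_lt (by rw [ee_sum]; omega),
            if_neg (by omega), if_neg (by omega)]
          ring
        rw [hz]
        simp only [ee_eq_iff]
        split_ifs <;> first | omega | simp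

lemma eval_ee (x y : ℝ) (r : ℝ) (n0 n1 : ℕ) :
    eval ![x, y] (monomial (ee n0 n1) r) = r * x ^ n0 * y ^ n1 := by
  rw [eval_monomial]
  rw [Finsupp.prod, Finset.prod_subset (Finset.subset_univ _)]
  · simp [Fin.prod_univ_two, ee, Finsupp.single_apply, mul_assoc]
  · intro i _ hi
    simp [Finsupp.notMem_support_iff.mp hi]

lemma quad_int (k0 k1 k2 a : ℝ) :
    (∫ x in (0:ℝ)..a, (k0 + k1*x + k2*x^2)) = k0*a + k1*(a^2/2) + k2*(a^3/3) := by
  have h1 : IntervalIntegrable (fun x : ℝ => k0 + k1*x) MeasureTheory.volume 0 a :=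
    (Continuous.intervalIntegrable (by continuity) _ _)
  have h2 : IntervalIntegrable (fun x : ℝ => k2*x^2) MeasureTheory.volume 0 a :=
    (Continuous.intervalIntegrable (by continuity) _ _)
  have h0 : IntervalIntegrable (fun x : ℝ => (k0:ℝ)) MeasureTheory.volume 0 a :=
    (Continuous.intervalIntegrable (by continuity) _ _)
  have h1' : IntervalIntegrable (fun x : ℝ => k1*x) MeasureTheory.volume 0 a :=
    (Continuous.intervalIntegrable (by continuity) _ _)
  rw [intervalIntegral.integral_add h1 h2, intervalIntegral.integral_add h0 h1',
    intervalIntegral.integral_const, intervalIntegral.integral_const_mul,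
    intervalIntegral.integral_const_mul, integral_id, integral_pow, smul_eq_mul]
  push_cast; ring

/-- unisolvency of the second-order serendipity element on
`K = [0,a] × [0,b]` with vertex values and edge integrals as degrees of freedom. -/
theorem stmt9 (a b : ℝ) (ha : 0 < a) (hb : 0 < b)
    (s : MvPolynomial (Fin 2) ℝ) (hs : memS2 s)
    (hV1 : eval ![(0:ℝ), 0] s = 0)
    (hV2 : eval ![a, 0] s = 0)
    (hV3 : eval ![a, b] s = 0)
    (hV4 : eval ![(0:ℝ), b] s = 0)
    (hE1 : (∫ x in (0:ℝ)..a, eval ![x, 0] s) = 0)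
    (hE3 : (∫ x in (0:ℝ)..a, eval ![x, b] s) = 0)
    (hE2 : (∫ y in (0:ℝ)..b, eval ![a, y] s) = 0)
    (hE4 : (∫ y in (0:ℝ)..b, eval ![(0:ℝ), y] s) = 0) :
    s = 0 := by
  set A := coeff (ee 0 0) s with hA
  set Bc := coeff (ee 1 0) s with hB
  set Cc := coeff (ee 0 1) s with hC
  set Dc := coeff (ee 2 0) s with hD
  set Ec := coeff (ee 1 1) s with hE
  set Fc := coeff (ee 0 2) s with hF
  set Gc := coeff (ee 2 1) s with hG
  set Hc := coeff (ee 1 2) s with hH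
  have hf : ∀ x y : ℝ, eval ![x, y] s
      = A + Bc*x + Cc*y + Dc*x^2 + Ec*(x*y) + Fc*y^2 + Gc*(x^2*y) + Hc*(x*y^2) := by
    intro x y
    conv_lhs => rw [rep s hs]
    simp only [map_add, eval_ee]
    ring
  simp only [hf] at hV1 hV2 hV3 hV4 hE1 hE2 hE3 hE4
  rw [intervalIntegral.integral_congr
      (g := fun x => A + Bc*x + Dc*x^2) (fun x _ => by ring), quad_int] at hE1
  rw [intervalIntegral.integral_congr
      (g := fun x => (A + Cc*b + Fc*b^2) + (Bc + Ec*b + Hc*b^2)*x + (Dc + Gc*b)*x^2)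
      (fun x _ => by ring), quad_int] at hE3
  rw [intervalIntegral.integral_congr
      (g := fun y => (A + Bc*a + Dc*a^2) + (Cc + Ec*a + Gc*a^2)*y + (Fc + Hc*a)*y^2)
      (fun y _ => by ring), quad_int] at hE2
  rw [intervalIntegral.integral_congr
      (g := fun y => A + Cc*y + Fc*y^2) (fun y _ => by ring), quad_int] at hE4
  have ha' : a ≠ 0 := ha.ne'
  have hb' : b ≠ 0 := hb.ne'
  have hA0 : A = 0 := by linear_combination hV1
  have hD0 : Dc = 0 := by
    have h4 : Dc * a^4 = 0 := by linear_combination 3*a^2*hV2 - 6*a*hE1 + 3*a^2*hA0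
    exact (mul_eq_zero.mp h4).resolve_right (pow_ne_zero 4 ha')
  have hB0 : Bc = 0 := by
    have h1 : Bc * a = 0 := by linear_combination hV2 - hA0 - a^2*hD0
    exact (mul_eq_zero.mp h1).resolve_right ha'
  have hF0 : Fc = 0 := by
    have h4 : Fc * b^4 = 0 := by linear_combination 3*b^2*hV4 - 6*b*hE4 + 3*b^2*hA0
    exact (mul_eq_zero.mp h4).resolve_right (pow_ne_zero 4 hb')
  have hC0 : Cc = 0 := by
    have h1 : Cc * b = 0 := by linear_combination hV4 - hA0 - b^2*hF0
    exact (mul_eq_zero.mp h1).resolve_right hb'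
  rw [hA0, hB0, hC0, hD0, hF0] at hV3 hE3 hE2
  have hG0 : Gc = 0 := by
    have h4 : Gc * (a^3*b) = 0 := by linear_combination 3*a*hV3 - 6*hE3
    rcases mul_eq_zero.mp h4 with h | h
    · exact h
    · exact absurd h (by positivity)
  have hH0 : Hc = 0 := by
    have h4 : Hc * (a*b^3) = 0 := by linear_combination 3*b*hV3 - 6*hE2
    rcases mul_eq_zero.mp h4 with h | h
    · exact h
    · exact absurd h (by positivity)
  have hE0 : Ec = 0 := by
    have h1 : Ec * (a*b) = 0 := by linear_combination hV3 - a^2*b*hG0 - a*b^2*hH0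
    rcases mul_eq_zero.mp h1 with h | h
    · exact h
    · exact absurd h (by positivity)
  rw [rep s hs, ← hA, ← hB, ← hC, ← hD, ← hE, ← hF, ← hG, ← hH,
    hA0, hB0, hC0, hD0, hE0, hF0, hG0, hH0]
  simp
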